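/- Let p ∈ ℝⁿ be nonnegative with ‖p‖₁ ≤ 1, and suppose γ ≥ (3σ/ε)·ln n with n ≥ 2, σ > 0, ε > 0. In the sparsification mechanism where index i is included with probability (1/2)exp(-(ε/σ)(γ-p_i)) when p_i ≤ γ and probability 1 - (1/2)exp((ε/σ)(γ-p_i)) otherwise, any fixed index i with p_i < γ/3 is included with probability at most 1/(2n²), and any fixed index i with p_i ≥ 2γ is excluded with probability at most 1/(2n²). -/
import Mathlib

theorem sparsification_prob_bounds (n : ℕ) (hn : 2 ≤ n) (p : Fin n → ℝ)
    (hp : ∀ i, 0 ≤ p i) (hl1 : (∑ i, p i) ≤ 1)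
    (σ ε γ : ℝ) (hσ : 0 < σ) (hε : 0 < ε) (hγ : γ ≥ (3 * σ / ε) * Real.log n) :
    (∀ i : Fin n, p i < γ / 3 →
      (1 / 2) * Real.exp (-(ε / σ) * (γ - p i)) ≤ 1 / (2 * (n : ℝ) ^ 2)) ∧
    (∀ i : Fin n, p i ≥ 2 * γ →
      (1 / 2) * Real.exp ((ε / σ) * (γ - p i)) ≤ 1 / (2 * (n : ℝ) ^ 2)) := by
  have hn1 : (1 : ℝ) < n := by exact_mod_cast lt_of_lt_of_le one_lt_two (by exact_mod_cast hn)
  have hn0 : (0 : ℝ) < n := by linarith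
  have hlog : 0 < Real.log n := Real.log_pos hn1
  have hγlog : (ε / σ) * γ ≥ 3 * Real.log n := by
    have h := mul_le_mul_of_nonneg_left hγ (le_of_lt (div_pos hε hσ))
    have : ε / σ * (3 * σ / ε * Real.log n) = 3 * Real.log n := by
      field_simp
    linarith [this ▸ h]
  have hγpos : 0 < γ := by
    have : 0 < (ε / σ) * γ := lt_of_lt_of_le (by linarith) hγlog
    nlinarith [div_pos hε hσ]
  have hkey : ∀ x : ℝ, x ≤ -(2 * Real.log n) →
      (1 / 2) * Real.exp x ≤ 1 / (2 * (n : ℝ) ^ 2) := by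
    intro x hx
    have h2 : Real.exp x ≤ Real.exp (-(2 * Real.log n)) := Real.exp_le_exp.mpr hx
    have h3 : Real.exp (-(2 * Real.log n)) = 1 / (n : ℝ) ^ 2 := by
      rw [Real.exp_neg, show (2 : ℝ) * Real.log n = Real.log (n ^ 2) by
        rw [Real.log_pow]; push_cast; ring, Real.exp_log (pow_pos hn0 2), one_div]
    rw [h3] at h2
    rw [show (1 : ℝ) / (2 * (n : ℝ) ^ 2) = (1 / 2) * (1 / (n : ℝ) ^ 2) by ring]
    have : (0:ℝ) < 1/2 := by norm_num
    nlinarith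
  have hεσ : 0 < ε / σ := div_pos hε hσ
  constructor
  · intro i hi
    apply hkey
    have h1 : (2/3 : ℝ) * γ ≤ γ - p i := by linarith
    have h2 : (ε / σ) * ((2/3) * γ) ≤ (ε / σ) * (γ - p i) :=
      mul_le_mul_of_nonneg_left h1 hεσ.le
    nlinarith
  · intro i hi
    apply hkey
    have h1 : γ - p i ≤ -γ := by linarith
    have h2 : (ε / σ) * (γ - p i) ≤ (ε / σ) * (-γ) :=
      mul_le_mul_of_nonneg_left h1 hεσ.le
    nlinarith
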